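/- arXiv:0709.1708 — 2 statements merged into one kernel-verified Lean document; each statement's English description precedes it below -/
import Mathlib

section
/- For an odd prime p, the sum over k from 1 to p-1 of ((1+μ^k)(1+μ^k))/((1-μ^k)(1-μ^k)), where μ = exp(2πi/p), equals -(p-1)(p-2)/3. -/
/-!
With `w k = (1 - μ ^ k)⁻¹` the summand is `(2 w k - 1) ^ 2`. The power sums `∑ w k` and
`∑ w k ^ 2` come from the logarithmic derivative of
`1 + X + ⋯ + X ^ (p - 1) = ∏ k ∈ [1, p - 1], (X - μ ^ k)` at `X = 1`, whose first two
derivatives there are `p (p - 1) / 2` and `p (p - 1) (p - 2) / 3`: differentiate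
`(X - 1) (1 + X + ⋯ + X ^ (p - 1)) = X ^ p - 1` twice and three times.
-/

open Finset

noncomputable def mu (p : ℕ) : ℂ := Complex.exp (2 * Real.pi * Complex.I / p)

noncomputable def Ipq (p : ℕ) (q : ℤ) : ℂ :=
  ∑ k ∈ Finset.Icc 1 (p - 1),
    ((1 + mu p ^ (k : ℤ)) * (1 + mu p ^ (q * k))) /
      ((1 - mu p ^ (k : ℤ)) * (1 - mu p ^ (q * k)))

open Polynomial

namespace Polynomial

variable {K : Type*} [Field K] {ι : Type*} (s : Finset ι) (r : ι → K) {x : K}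

theorem eval_derivative_prod_X_sub_C (hx : ∀ i ∈ s, x - r i ≠ 0) :
    eval x (derivative (∏ i ∈ s, (X - C (r i)))) =
      (∏ i ∈ s, (x - r i)) * ∑ i ∈ s, (x - r i)⁻¹ := by
  classical
  induction s using Finset.induction_on with
  | empty => simp
  | insert a s ha ih =>
    have hxa := hx a (mem_insert_self a s)
    rw [prod_insert ha, prod_insert ha, sum_insert ha, derivative_mul, derivative_X_sub_C,
      eval_add, eval_mul, eval_mul, ih fun i hi ↦ hx i (mem_insert_of_mem hi)]
    simp only [eval_one, eval_sub, eval_X, eval_C, eval_prod]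
    field_simp

theorem eval_derivative_derivative_prod_X_sub_C (hx : ∀ i ∈ s, x - r i ≠ 0) :
    eval x (derivative (derivative (∏ i ∈ s, (X - C (r i))))) =
      (∏ i ∈ s, (x - r i)) * ((∑ i ∈ s, (x - r i)⁻¹) ^ 2 - ∑ i ∈ s, (x - r i)⁻¹ ^ 2) := by
  classical
  induction s using Finset.induction_on with
  | empty => simp
  | insert a s ha ih =>
    have hxs : ∀ i ∈ s, x - r i ≠ 0 := fun i hi ↦ hx i (mem_insert_of_mem hi)
    have hxa := hx a (mem_insert_self a s)
    simp only [prod_insert ha, sum_insert ha, derivative_mul, derivative_add, derivative_X_sub_C,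
      one_mul, eval_add, eval_mul, eval_sub, eval_X, eval_C,
      eval_derivative_prod_X_sub_C s r hxs, ih hxs]
    field_simp
    ring

theorem eval_one_iterate_derivative_geom_sum {R : Type*} [CommRing R] (n k : ℕ) :
    (k + 1 : R) * eval 1 (derivative^[k] (∑ i ∈ range n, (X : R[X]) ^ i)) =
      n.descFactorial (k + 1) := by
  have h := congrArg (fun f ↦ eval 1 (derivative^[k + 1] f)) (geom_sum_mul (X : R[X]) n)
  simp only [mul_sub, mul_one, iterate_derivative_sub, iterate_derivative_mul_X,
    iterate_derivative_X_pow_eq_smul, iterate_derivative_one k.succ_pos, eval_sub, eval_add,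
    eval_mul, eval_smul, eval_X, eval_pow, one_pow, eval_zero] at h
  simpa [nsmul_eq_mul] using h

end Polynomial

namespace IsPrimitiveRoot

theorem geom_sum_X_eq_prod_X_sub_C {R : Type*} [CommRing R] [IsDomain R] {ζ : R} {n : ℕ}
    (hζ : IsPrimitiveRoot ζ (n + 1)) :
    ∑ i ∈ range (n + 1), (X : R[X]) ^ i = ∏ k ∈ Icc 1 n, (X - C (ζ ^ k)) := by
  have h := X_pow_sub_C_eq_prod hζ n.succ_pos (one_pow (n + 1))
  have hrange : range (n + 1) = insert 0 (Icc 1 n) := by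
    ext k; simp only [mem_range, mem_insert, mem_Icc]; omega
  rw [hrange, prod_insert (by simp), pow_zero, one_mul, C_1, ← mul_geom_sum] at h
  exact mul_left_cancel₀ (X_sub_C_ne_zero 1) (by simpa using h)

variable {K : Type*} [Field K] {ζ : K} {n : ℕ}

theorem one_sub_pow_ne_zero (hζ : IsPrimitiveRoot ζ (n + 1)) {k : ℕ} (hk : k ∈ Icc 1 n) :
    1 - ζ ^ k ≠ 0 := by
  rw [mem_Icc] at hk
  exact sub_ne_zero.2 (hζ.pow_ne_one_of_pos_of_lt (by omega) (by omega)).symm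

theorem prod_one_sub_pow_Icc (hζ : IsPrimitiveRoot ζ (n + 1)) :
    ∏ k ∈ Icc 1 n, (1 - ζ ^ k) = n + 1 := by
  simpa [eval_prod] using (congrArg (eval 1) hζ.geom_sum_X_eq_prod_X_sub_C).symm

theorem two_mul_sum_inv_one_sub_pow (hζ : IsPrimitiveRoot ζ (n + 1)) :
    2 * ∑ k ∈ Icc 1 n, (1 - ζ ^ k)⁻¹ = n := by
  have h := eval_one_iterate_derivative_geom_sum (R := K) (n + 1) 1
  rw [Function.iterate_one, hζ.geom_sum_X_eq_prod_X_sub_C,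
    eval_derivative_prod_X_sub_C _ _ fun k hk ↦ hζ.one_sub_pow_ne_zero hk,
    hζ.prod_one_sub_pow_Icc, Nat.cast_descFactorial_two] at h
  refine mul_left_cancel₀ hζ.neZero'.out ?_
  push_cast at h ⊢
  linear_combination h

theorem three_mul_sq_sum_inv_one_sub_pow_sub_sum_sq (hζ : IsPrimitiveRoot ζ (n + 1)) :
    3 * ((∑ k ∈ Icc 1 n, (1 - ζ ^ k)⁻¹) ^ 2 - ∑ k ∈ Icc 1 n, (1 - ζ ^ k)⁻¹ ^ 2) =
      n * (n - 1) := by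
  have h := eval_one_iterate_derivative_geom_sum (R := K) (n + 1) 2
  rw [Function.iterate_succ_apply, Function.iterate_one, hζ.geom_sum_X_eq_prod_X_sub_C,
    eval_derivative_derivative_prod_X_sub_C _ _ fun k hk ↦ hζ.one_sub_pow_ne_zero hk,
    hζ.prod_one_sub_pow_Icc, ← descPochhammer_eval_eq_descFactorial] at h
  -- `descPochhammer` gives `(n + 1) n (n - 1)` in `K`, free of the truncated `n + 1 - 2` in `ℕ`
  simp only [descPochhammer_succ_eval, descPochhammer_zero, eval_one] at h
  refine mul_left_cancel₀ hζ.neZero'.out ?_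
  push_cast at h ⊢
  linear_combination h

end IsPrimitiveRoot

theorem stmt_1_general (p : ℕ) (hp : p.Prime) :
    ∑ k ∈ Finset.Icc 1 (p - 1),
      ((1 + mu p ^ (k : ℤ)) * (1 + mu p ^ (k : ℤ))) /
        ((1 - mu p ^ (k : ℤ)) * (1 - mu p ^ (k : ℤ))) =
      -(((p : ℂ) - 1) * ((p : ℂ) - 2) / 3) := by
  obtain ⟨n, rfl⟩ := Nat.exists_eq_add_one_of_ne_zero hp.ne_zero
  have hζ : IsPrimitiveRoot (mu (n + 1)) (n + 1) := Complex.isPrimitiveRoot_exp _ n.succ_ne_zero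
  have hsummand : ∀ k ∈ Icc 1 n,
      ((1 + mu (n + 1) ^ (k : ℤ)) * (1 + mu (n + 1) ^ (k : ℤ))) /
        ((1 - mu (n + 1) ^ (k : ℤ)) * (1 - mu (n + 1) ^ (k : ℤ))) =
      4 * (1 - mu (n + 1) ^ k)⁻¹ ^ 2 - 4 * (1 - mu (n + 1) ^ k)⁻¹ + 1 := by
    intro k hk
    have hk' := hζ.one_sub_pow_ne_zero hk
    rw [zpow_natCast]
    field_simp
    ring
  rw [Nat.add_sub_cancel, sum_congr rfl hsummand, sum_add_distrib, sum_sub_distrib, ← mul_sum,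
    ← mul_sum, sum_const, Nat.card_Icc, Nat.add_sub_cancel, nsmul_one]
  push_cast
  linear_combination (2 * ∑ k ∈ Icc 1 n, (1 - mu (n + 1) ^ k)⁻¹ + n - 2) *
    hζ.two_mul_sum_inv_one_sub_pow - 4 / 3 * hζ.three_mul_sq_sum_inv_one_sub_pow_sub_sum_sq

theorem stmt_1 (p : ℕ) (hp : p.Prime) (hodd : Odd p) :
    ∑ k ∈ Finset.Icc 1 (p - 1),
      ((1 + mu p ^ (k : ℤ)) * (1 + mu p ^ (k : ℤ))) /
        ((1 - mu p ^ (k : ℤ)) * (1 - mu p ^ (k : ℤ))) =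
      -(((p : ℂ) - 1) * ((p : ℂ) - 2) / 3) :=
  stmt_1_general p hp
end

section
/- For a prime p > 3, define def_(2) = I_{p,-6} + I_{p,(p+3)/2}, where I_{p,q} = Σ_{k=1}^{p-1} ((1+μ^k)(1+μ^{kq}))/((1−μ^k)(1−μ^{kq})) and μ = exp(2πi/p). Then def_(2) = −8r if p = 6r+1 and def_(2) = 8r+8 if p = 6r+5. -/
open Finset

/-!
For `x ≠ 0` in `ZMod N` let `ζ = ψ x`, with `ψ` the standard additive character. Summing
`valTransform x = ∑ a, a.val * ζ ^ a.val` by parts gives `(1 - ζ) * valTransform x = -N`, so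
`N * (1 + ζ) / (1 - ζ) = -(N + 2 * valTransform x)`. Expanding the product in `I_{N,q}` and using
orthogonality of `ψ` then yields `N * I_{N,q} = 4 * valMulSum (-q) - N ^ 2 * (N - 1)`.

For `q = -6` and `q = (p + 3) / 2` (substitute `x ↦ 2 * x` in the second, as `-2 * q = -3`) the two
sums combine to `∑ b < p, defectTerm p b`. On each sixth `j p / 6 ≤ b < (j + 1) p / 6` of `[0, p)`
the three residues in `defectTerm p b` are affine in `b` and the quadratic terms cancel, so the sum
is an explicit function of the cut points `⌈j p / 6⌉`, which are linear in `r` once `p mod 6` is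
fixed.
-/

open ZMod (stdAddChar)

section

variable {N : ℕ} [NeZero N]

lemma ZMod.sum_val_eq_sum_range {M : Type*} [AddCommMonoid M] (f : ℕ → M) :
    ∑ x : ZMod N, f x.val = ∑ k ∈ range N, f k :=
  sum_nbij' ZMod.val Nat.cast (fun x _ => mem_range.mpr x.val_lt) (fun _ _ => mem_univ _)
    (fun x _ => ZMod.natCast_zmod_val x) (fun _ hk => ZMod.val_cast_of_lt (mem_range.mp hk))
    fun _ _ => rfl

lemma mu_zpow (m : ℤ) : mu N ^ m = stdAddChar (m : ZMod N) := by
  rw [ZMod.stdAddChar_coe, mu, ← Complex.exp_int_mul]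
  ring_nf

lemma sum_stdAddChar_mul (a : ZMod N) :
    ∑ x : ZMod N, stdAddChar (a * x) = if a = 0 then (N : ℂ) else 0 := by
  simp_rw [mul_comm a, AddChar.sum_mulShift a (ZMod.isPrimitive_stdAddChar N), ZMod.card]
  split_ifs <;> simp

noncomputable def valTransform (x : ZMod N) : ℂ :=
  ∑ a : ZMod N, (a.val : ℂ) * stdAddChar (a * x)

def valMulSum (a : ZMod N) : ℕ := ∑ x : ZMod N, (a * x).val * x.val

lemma sum_valTransform : ∑ x : ZMod N, valTransform x = 0 := by
  simp [valTransform, sum_comm (γ := ZMod N), ← mul_sum, sum_stdAddChar_mul]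

lemma sum_valTransform_mul_valTransform_mul (c : ZMod N) :
    ∑ x : ZMod N, valTransform x * valTransform (c * x) = N * valMulSum (-c) := by
  have h (a b : ZMod N) : ∑ x : ZMod N, stdAddChar (a * x) * stdAddChar (b * (c * x)) =
      if a = -c * b then (N : ℂ) else 0 := by
    simp_rw [← AddChar.map_add_eq_mul, ← mul_assoc, ← add_mul, sum_stdAddChar_mul,
      add_eq_zero_iff_eq_neg, neg_mul, mul_comm b c]
  calc ∑ x : ZMod N, valTransform x * valTransform (c * x)
      = ∑ a : ZMod N, ∑ b : ZMod N, (a.val * b.val : ℂ) *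
          ∑ x : ZMod N, stdAddChar (a * x) * stdAddChar (b * (c * x)) := by
        simp_rw [valTransform, sum_mul_sum, mul_sum]
        rw [sum_comm]
        refine sum_congr rfl fun a _ => ?_
        rw [sum_comm]
        refine sum_congr rfl fun b _ => sum_congr rfl fun x _ => by ring
    _ = ∑ b : ZMod N, ∑ a : ZMod N,
          if a = -c * b then (N * ((-c * b).val * b.val) : ℂ) else 0 := by
        rw [sum_comm]
        refine sum_congr rfl fun b _ => sum_congr rfl fun a _ => ?_
        rw [h]
        split_ifs with hab
        · rw [hab]; ring
        · simp
    _ = N * valMulSum (-c) := by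
        simp [valMulSum, mul_sum]

lemma two_mul_valTransform_zero : 2 * valTransform (0 : ZMod N) = N * (N - 1) := by
  simp only [valTransform, mul_zero, AddChar.map_zero_eq_one, mul_one]
  rw [ZMod.sum_val_eq_sum_range (fun k => (k : ℂ))]
  have := congrArg (Nat.cast : ℕ → ℂ) (sum_range_id_mul_two N)
  push_cast [Nat.cast_sub NeZero.one_le (n := N)] at this
  linear_combination this

lemma sub_one_mul_sum_range_mul_pow {R : Type*} [CommRing R] (z : R) (n : ℕ) :
    (z - 1) * ∑ k ∈ range n, (k : R) * z ^ k = (n - 1) * z ^ n - ∑ k ∈ range n, z ^ k + 1 := by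
  induction n with
  | zero => simp
  | succ n ih =>
    rw [sum_range_succ, sum_range_succ]
    push_cast
    linear_combination ih

lemma one_sub_mul_valTransform {x : ZMod N} (hx : x ≠ 0) :
    (1 - stdAddChar x) * valTransform x = -N := by
  have hpow : stdAddChar x ^ N = 1 := by
    rw [← AddChar.map_nsmul_eq_pow, nsmul_eq_mul, ZMod.natCast_self, zero_mul,
      AddChar.map_zero_eq_one]
  have hne : stdAddChar x ≠ 1 := by
    rwa [← AddChar.map_zero_eq_one (stdAddChar (N := N)), ZMod.injective_stdAddChar.ne_iff]
  have hgeom : ∑ k ∈ range N, stdAddChar x ^ k = 0 := by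
    rw [geom_sum_eq hne, hpow, sub_self, zero_div]
  have h := sub_one_mul_sum_range_mul_pow (stdAddChar x) N
  rw [hpow, hgeom] at h
  have : valTransform x = ∑ k ∈ range N, (k : ℂ) * stdAddChar x ^ k := by
    rw [valTransform, ← ZMod.sum_val_eq_sum_range (fun k => (k : ℂ) * stdAddChar x ^ k)]
    simp_rw [← AddChar.map_nsmul_eq_pow, nsmul_eq_mul, ZMod.natCast_zmod_val]
  rw [this]
  linear_combination -h

lemma natCast_mul_one_add_div_one_sub {x : ZMod N} (hx : x ≠ 0) :
    N * ((1 + stdAddChar x) / (1 - stdAddChar x)) = -(N + 2 * valTransform x) := by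
  have h := one_sub_mul_valTransform hx
  have hne : 1 - stdAddChar x ≠ 0 := left_ne_zero_of_mul (h.trans_ne (by simp [NeZero.ne N]))
  rw [mul_div_assoc', div_eq_iff hne]
  linear_combination 2 * h

lemma Ipq_eq_sum_erase_zero (q : ℤ) : Ipq N q = ∑ x ∈ univ.erase (0 : ZMod N),
    (1 + stdAddChar x) * (1 + stdAddChar ((q : ZMod N) * x)) /
      ((1 - stdAddChar x) * (1 - stdAddChar ((q : ZMod N) * x))) := by
  refine sum_nbij' Nat.cast ZMod.val (fun k hk => ?_) (fun x hx => ?_) (fun k hk => ?_)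
    (fun x _ => ZMod.natCast_zmod_val x) fun k _ => ?_
  · rw [mem_Icc] at hk
    rw [mem_erase, ne_eq, ZMod.natCast_eq_zero_iff]
    exact ⟨fun h => by have := Nat.le_of_dvd (by omega) h; omega, mem_univ _⟩
  · have h₁ := x.val_lt
    have h₂ := (ZMod.val_ne_zero x).mpr (ne_of_mem_erase hx)
    rw [mem_Icc]
    omega
  · rw [mem_Icc] at hk
    exact ZMod.val_cast_of_lt (by omega)
  · simp only [mu_zpow]
    push_cast
    rfl

lemma natCast_mul_Ipq {q : ℤ} (hq : IsUnit (q : ZMod N)) :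
    N * Ipq N q = 4 * valMulSum (-(q : ZMod N)) - (N : ℂ) ^ 2 * (N - 1) := by
  set c : ZMod N := (q : ZMod N)
  set T : ZMod N → ℂ := fun x => (N + 2 * valTransform x) * (N + 2 * valTransform (c * x))
  have hterm (x : ZMod N) (hx : x ∈ univ.erase 0) :
      N ^ 2 * ((1 + stdAddChar x) * (1 + stdAddChar (c * x)) /
        ((1 - stdAddChar x) * (1 - stdAddChar (c * x)))) = T x := by
    have hx := ne_of_mem_erase hx
    rw [mul_div_mul_comm, sq, mul_mul_mul_comm, natCast_mul_one_add_div_one_sub hx,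
      natCast_mul_one_add_div_one_sub ((hq.mul_right_eq_zero).not.mpr hx)]
    ring
  have hc : ∑ x : ZMod N, valTransform (c * x) = ∑ x : ZMod N, valTransform x :=
    Equiv.sum_comp (Units.mulLeft hq.unit) valTransform
  have hT : ∑ x : ZMod N, T x = N ^ 3 + 4 * N * valMulSum (-c) := by
    simp only [T, add_mul, mul_add, sum_add_distrib, ← mul_sum, ← sum_mul, sum_const, card_univ,
      ZMod.card, nsmul_eq_mul, hc, sum_valTransform]
    have h₄ : ∑ x : ZMod N, 2 * valTransform x * (2 * valTransform (c * x)) =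
        4 * ∑ x : ZMod N, valTransform x * valTransform (c * x) := by
      rw [mul_sum]
      exact sum_congr rfl fun _ _ => by ring
    linear_combination h₄ + 4 * sum_valTransform_mul_valTransform_mul c
  -- `Ipq` omits `x = 0`, whose term `T 0 = N ^ 4` is removed from the full sum `hT`.
  apply mul_left_cancel₀ (Nat.cast_ne_zero.mpr (NeZero.ne N) : (N : ℂ) ≠ 0)
  rw [← mul_assoc, ← sq, Ipq_eq_sum_erase_zero, mul_sum, sum_congr rfl hterm,
    sum_erase_eq_sub (mem_univ 0), hT, mul_zero, two_mul_valTransform_zero]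
  ring

lemma ZMod.val_intCast_mul (k : ℤ) (x : ZMod N) :
    (((k : ZMod N) * x).val : ℤ) = k * x.val % N := by
  rw [← ZMod.val_intCast]
  push_cast
  rw [ZMod.natCast_zmod_val]

lemma valMulSum_eq_sum_range {a : ZMod N} {k l : ℤ} (hl : IsUnit (l : ZMod N))
    (hkl : a * l = k) :
    (valMulSum a : ℤ) = ∑ b ∈ range N, k * b % N * (l * b % N) := by
  rw [valMulSum, ← Equiv.sum_comp (Units.mulLeft hl.unit)]
  push_cast
  simp only [Units.mulLeft_apply, IsUnit.unit_spec, ← mul_assoc, hkl, ZMod.val_intCast_mul]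
  exact ZMod.sum_val_eq_sum_range (fun b => k * b % N * (l * b % N))

end

lemma Int.emod_eq_sub_mul_of_le_of_lt {a n k : ℤ} (h₁ : k * n ≤ a) (h₂ : a < k * n + n) :
    a % n = a - k * n := by
  rw [← Int.sub_mul_emod_self_right a k n]
  exact Int.emod_eq_of_lt (by linarith) (by linarith)

lemma two_mul_sum_Ico_natCast {m n : ℕ} (h : m ≤ n) :
    2 * ∑ b ∈ Ico m n, (b : ℤ) = n * (n - 1) - m * (m - 1) := by
  induction n, h using Nat.le_induction with
  | base => simp
  | succ n hmn ih =>
    rw [sum_Ico_succ_top hmn, mul_add, ih]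
    push_cast
    ring

lemma two_mul_sum_Ico_affine {m n : ℕ} (f : ℕ → ℤ) (α β : ℤ) (h : m ≤ n)
    (hf : ∀ b ∈ Ico m n, f b = α * b + β) :
    2 * ∑ b ∈ Ico m n, f b = α * (n * (n - 1) - m * (m - 1)) + 2 * β * (n - m) := by
  rw [sum_congr rfl hf, sum_add_distrib, ← mul_sum, sum_const, Nat.card_Ico, nsmul_eq_mul,
    mul_add, mul_left_comm, two_mul_sum_Ico_natCast h, Nat.cast_sub h]
  ring

def defectTerm (p b : ℤ) : ℤ := 6 * b % p * (b % p) + -3 * b % p * (2 * b % p)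

lemma defectTerm_eq {p b j k l : ℤ} (hb : 0 ≤ b ∧ b < p)
    (h₆ : j * p ≤ 6 * b ∧ 6 * b < j * p + p) (h₂ : k * p ≤ 2 * b ∧ 2 * b < k * p + p)
    (h₃ : l * p < 3 * b ∧ 3 * b < l * p + p) :
    defectTerm p b = p * ((2 * l + 2 - j + 3 * k) * b - (l + 1) * k * p) := by
  rw [defectTerm, Int.emod_eq_sub_mul_of_le_of_lt h₆.1 h₆.2, Int.emod_eq_of_lt hb.1 hb.2,
    Int.emod_eq_sub_mul_of_le_of_lt h₂.1 h₂.2,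
    Int.emod_eq_sub_mul_of_le_of_lt (k := -(l + 1)) (by linarith) (by linarith)]
  ring

lemma two_mul_sum_defectTerm_Ico (p : ℕ) (j k l : ℤ) {m n : ℕ} (h : m ≤ n)
    (hb : ∀ b ∈ Ico m n, (0 ≤ (b : ℤ) ∧ (b : ℤ) < p) ∧ (j * p ≤ 6 * b ∧ 6 * b < j * p + p) ∧
      (k * p ≤ 2 * b ∧ 2 * b < k * p + p) ∧ (l * p < 3 * b ∧ 3 * b < l * p + p)) :
    2 * ∑ b ∈ Ico m n, defectTerm p b = p * (2 * l + 2 - j + 3 * k) * (n * (n - 1) - m * (m - 1))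
      - 2 * (l + 1) * k * p ^ 2 * (n - m) := by
  have hf (b : ℕ) (hb' : b ∈ Ico m n) :
      defectTerm p b = p * (2 * l + 2 - j + 3 * k) * b + -(p * (l + 1) * k * p) := by
    obtain ⟨h₀, h₆, h₂, h₃⟩ := hb b hb'
    rw [defectTerm_eq h₀ h₆ h₂ h₃]
    ring
  rw [two_mul_sum_Ico_affine _ _ _ h hf]
  ring

lemma two_mul_sum_defectTerm (p : ℕ) (hp : p % 3 ≠ 0) (c : ℕ → ℕ)
    -- `c j = ⌈j * p / 6⌉`
    (hc : ∀ j, 1 ≤ j → j ≤ 5 → j * p ≤ 6 * c j ∧ 6 * c j < j * p + 6) :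
    2 * ∑ b ∈ range p, defectTerm p b =
      p * (c 1 * (c 1 - 1) - c 2 * (c 2 - 1) - 2 * (c 3 * (c 3 - 1)) - c 4 * (c 4 - 1)
        + c 5 * (c 5 - 1) + 4 * (p * (p - 1))) - 2 * p ^ 2 * (3 * p - 2 * c 3 - c 4) := by
  have hp₃ (b : ℕ) : 3 * b ≠ p ∧ 3 * b ≠ 2 * p := by omega
  obtain ⟨h₁, h₁'⟩ := hc 1 le_rfl (by norm_num)
  obtain ⟨h₂, h₂'⟩ := hc 2 (by norm_num) (by norm_num)
  obtain ⟨h₃, h₃'⟩ := hc 3 (by norm_num) (by norm_num)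
  obtain ⟨h₄, h₄'⟩ := hc 4 (by norm_num) (by norm_num)
  obtain ⟨h₅, h₅'⟩ := hc 5 (by norm_num) le_rfl
  have hsplit : ∑ b ∈ range p, defectTerm p b = ∑ b ∈ Ico 1 (c 1), defectTerm p b +
      ∑ b ∈ Ico (c 1) (c 2), defectTerm p b + ∑ b ∈ Ico (c 2) (c 3), defectTerm p b +
      ∑ b ∈ Ico (c 3) (c 4), defectTerm p b + ∑ b ∈ Ico (c 4) (c 5), defectTerm p b +
      ∑ b ∈ Ico (c 5) p, defectTerm p b := by
    have hmono : 1 ≤ c 1 ∧ c 1 ≤ c 2 ∧ c 2 ≤ c 3 ∧ c 3 ≤ c 4 ∧ c 4 ≤ c 5 ∧ c 5 ≤ p := by omega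
    rw [range_eq_Ico, sum_eq_sum_Ico_succ_bot (by omega),
      ← sum_Ico_consecutive _ hmono.1 (by omega : c 1 ≤ p),
      ← sum_Ico_consecutive _ hmono.2.1 (by omega : c 2 ≤ p),
      ← sum_Ico_consecutive _ hmono.2.2.1 (by omega : c 3 ≤ p),
      ← sum_Ico_consecutive _ hmono.2.2.2.1 (by omega : c 4 ≤ p),
      ← sum_Ico_consecutive _ hmono.2.2.2.2.1 hmono.2.2.2.2.2]
    rw [show defectTerm p (0 : ℕ) = 0 by simp [defectTerm], zero_add]
    ring
  -- On the `j`-th piece `(j, k, l) = (⌊6b/p⌋, ⌊2b/p⌋, ⌊3b/p⌋)`; `b = 0` was split off above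
  -- because there `-3 * b % p = 0` rather than `(l + 1) * p - 3 * b`.
  have e₀ := two_mul_sum_defectTerm_Ico p 0 0 0 (m := 1) (n := c 1) (by omega) (by
    intro b hb; rw [mem_Ico] at hb; have := hp₃ b; omega)
  have e₁ := two_mul_sum_defectTerm_Ico p 1 0 0 (m := c 1) (n := c 2) (by omega) (by
    intro b hb; rw [mem_Ico] at hb; have := hp₃ b; omega)
  have e₂ := two_mul_sum_defectTerm_Ico p 2 0 1 (m := c 2) (n := c 3) (by omega) (by
    intro b hb; rw [mem_Ico] at hb; have := hp₃ b; omega)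
  have e₃ := two_mul_sum_defectTerm_Ico p 3 1 1 (m := c 3) (n := c 4) (by omega) (by
    intro b hb; rw [mem_Ico] at hb; have := hp₃ b; omega)
  have e₄ := two_mul_sum_defectTerm_Ico p 4 1 2 (m := c 4) (n := c 5) (by omega) (by
    intro b hb; rw [mem_Ico] at hb; have := hp₃ b; omega)
  have e₅ := two_mul_sum_defectTerm_Ico p 5 1 2 (m := c 5) (n := p) (by omega) (by
    intro b hb; rw [mem_Ico] at hb; have := hp₃ b; omega)
  rw [hsplit]
  push_cast at e₀ ⊢
  linear_combination e₀ + e₁ + e₂ + e₃ + e₄ + e₅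

lemma two_mul_sum_defectTerm_of_eq_six_mul_add_one {p r : ℕ} (hp : p = 6 * r + 1) :
    2 * ∑ b ∈ range p, defectTerm p b = (p : ℤ) ^ 2 * (p - 1) - 4 * r * p := by
  rw [two_mul_sum_defectTerm p (by omega) (fun j => j * r + 1) fun j hj₁ hj₅ => by
    interval_cases j <;> omega, hp]
  push_cast
  ring

lemma two_mul_sum_defectTerm_of_eq_six_mul_add_five {p r : ℕ} (hp : p = 6 * r + 5) :
    2 * ∑ b ∈ range p, defectTerm p b = (p : ℤ) ^ 2 * (p - 1) + 4 * (r + 1) * p := by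
  rw [two_mul_sum_defectTerm p (by omega) (fun j => j * (r + 1)) fun j hj₁ hj₅ => by
    interval_cases j <;> omega, hp]
  push_cast
  ring

section

variable {p : ℕ} [Fact p.Prime]

lemma natCast_mul_Ipq_add_Ipq (hp3 : 3 < p) :
    p * (Ipq p (-6) + Ipq p (((p : ℤ) + 3) / 2)) =
      4 * ((∑ b ∈ range p, defectTerm p b : ℤ) : ℂ) - 2 * (p : ℂ) ^ 2 * (p - 1) := by
  have hp := Fact.out (p := p.Prime)
  set q : ℤ := ((p : ℤ) + 3) / 2
  have hodd := hp.eq_two_or_odd'.resolve_left (by omega)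
  have h2q : (2 : ZMod p) * q = 3 := by
    have : 2 * q = p + 3 := by obtain ⟨k, hk⟩ := hodd; omega
    exact_mod_cast (congrArg (Int.cast : ℤ → ZMod p) this).trans (by simp)
  have h2 : (2 : ZMod p) ≠ 0 := by exact_mod_cast ZMod.prime_ne_zero p 2 (by omega)
  have h3 : (3 : ZMod p) ≠ 0 := by exact_mod_cast ZMod.prime_ne_zero p 3 (by omega)
  have e₁ := natCast_mul_Ipq (N := p) (q := -6) <| isUnit_iff_ne_zero.mpr <| by
    rw [Int.cast_neg, neg_ne_zero, show ((6 : ℤ) : ZMod p) = 2 * 3 by norm_num]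
    exact mul_ne_zero h2 h3
  have e₂ := natCast_mul_Ipq (N := p) (q := q) <| isUnit_iff_ne_zero.mpr fun h => h3 <| by
    rw [← h2q, h, mul_zero]
  have w₁ := valMulSum_eq_sum_range (a := -((-6 : ℤ) : ZMod p)) (k := 6) (l := 1) (by simp)
    (by push_cast; ring)
  have w₂ := valMulSum_eq_sum_range (a := -(q : ZMod p)) (k := -3) (l := 2)
    (by exact_mod_cast isUnit_iff_ne_zero.mpr h2) (by push_cast; linear_combination -h2q)
  have hW : (valMulSum (-((-6 : ℤ) : ZMod p)) : ℤ) + valMulSum (-(q : ZMod p)) =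
      ∑ b ∈ range p, defectTerm p b := by
    rw [w₁, w₂, ← sum_add_distrib]
    simp only [defectTerm, one_mul]
  rw [mul_add, e₁, e₂, ← hW]
  push_cast
  ring

end

theorem stmt_16 (p : ℕ) (hp : p.Prime) (hp3 : 3 < p) :
    (∀ r : ℕ, p = 6 * r + 1 →
      Ipq p (-6) + Ipq p (((p : ℤ) + 3) / 2) = -(8 * (r : ℂ))) ∧
    (∀ r : ℕ, p = 6 * r + 5 →
      Ipq p (-6) + Ipq p (((p : ℤ) + 3) / 2) = 8 * (r : ℂ) + 8) := by
  have : Fact p.Prime := ⟨hp⟩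
  have hp₀ : (p : ℂ) ≠ 0 := Nat.cast_ne_zero.mpr hp.ne_zero
  constructor
  · intro r hr
    have h := congrArg (Int.cast : ℤ → ℂ) (two_mul_sum_defectTerm_of_eq_six_mul_add_one hr)
    refine mul_left_cancel₀ hp₀ ?_
    rw [natCast_mul_Ipq_add_Ipq hp3]
    push_cast at h ⊢
    linear_combination 2 * h
  · intro r hr
    have h := congrArg (Int.cast : ℤ → ℂ) (two_mul_sum_defectTerm_of_eq_six_mul_add_five hr)
    refine mul_left_cancel₀ hp₀ ?_
    rw [natCast_mul_Ipq_add_Ipq hp3]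
    push_cast at h ⊢
    linear_combination 2 * h
end
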